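/- Let T(t) = e^{At} t^{J/2} where A is the N×N nilpotent matrix with superdiagonal entries ν_i and J = diag(N−1,…,1,0). Then T satisfies the first-order matrix ODE T'(t) = (1/2)(J/t + A) T(t) for t > 0. -/

import Mathlib

open Matrix
noncomputable section

def matA (N : ℕ) (ν : ℕ → ℂ) : Matrix (Fin N) (Fin N) ℂ :=
  Matrix.of fun i j => if (j : ℕ) = (i : ℕ) + 1 then ν ((i : ℕ) + 1) else 0

def matJ (N : ℕ) : Matrix (Fin N) (Fin N) ℂ :=
  Matrix.diagonal fun i => ((N - 1 - (i : ℕ) : ℕ) : ℂ)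

/-- `t^(J/2) = e^{(J log t)/2}`, a diagonal matrix with entries `t^((N-1-i)/2)`. -/
def tJhalf (N : ℕ) (t : ℝ) : Matrix (Fin N) (Fin N) ℂ :=
  Matrix.diagonal fun i => (t : ℂ) ^ ((((N - 1 - (i : ℕ) : ℕ) : ℂ)) / 2)

/-- `T(t) = e^{At} t^{J/2}`. -/
def matT (N : ℕ) (ν : ℕ → ℂ) (t : ℝ) : Matrix (Fin N) (Fin N) ℂ :=
  NormedSpace.exp ((t : ℂ) • matA N ν) * tJhalf N t

lemma matA_pow_eq_zero_of (N : ℕ) (ν : ℕ → ℂ) :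
    ∀ n : ℕ, ∀ i j : Fin N, (j : ℕ) < (i : ℕ) + n → ((matA N ν) ^ n) i j = 0 := by
  intro n
  induction n with
  | zero =>
    intro i j h
    simp only [Nat.add_zero] at h
    have : i ≠ j := by intro hij; subst hij; omega
    simp [Matrix.one_apply_ne this]
  | succ n ih =>
    intro i j h
    rw [pow_succ, Matrix.mul_apply]
    apply Finset.sum_eq_zero
    intro k _
    by_cases hk : (j : ℕ) = (k : ℕ) + 1
    · have : ((matA N ν) ^ n) i k = 0 := ih i k (by omega)
      rw [this, zero_mul]
    · have : matA N ν k j = 0 := by simp [matA, hk]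
      rw [this, mul_zero]

lemma matA_pow_N (N : ℕ) (ν : ℕ → ℂ) : (matA N ν) ^ N = 0 := by
  ext i j
  exact matA_pow_eq_zero_of N ν N i j (by omega)

lemma matA_pow_zero_ge (N : ℕ) (ν : ℕ → ℂ) {n : ℕ} (hn : N ≤ n) : (matA N ν) ^ n = 0 := by
  have : (matA N ν) ^ n = (matA N ν) ^ N * (matA N ν) ^ (n - N) := by
    rw [← pow_add]; congr 1; omega
  rw [this, matA_pow_N, zero_mul]

lemma expA_eq (N : ℕ) (ν : ℕ → ℂ) (s : ℂ) :
    NormedSpace.exp (s • matA N ν) =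
      ∑ n ∈ Finset.range N, (s ^ n * ((n : ℕ).factorial : ℂ)⁻¹) • (matA N ν) ^ n := by
  simp only [NormedSpace.exp_eq_tsum ℂ]
  rw [tsum_eq_sum (s := Finset.range N)]
  · apply Finset.sum_congr rfl
    intro n _
    rw [smul_pow, smul_smul, mul_comm]
  · intro n hn
    have : N ≤ n := by simpa using hn
    rw [smul_pow, matA_pow_zero_ge N ν this, smul_zero, smul_zero]

/-- commutator entrywise: `(c i - c j) * (A^n) i j = n * (A^n) i j`. -/
lemma comm_pow (N : ℕ) (ν : ℕ → ℂ) :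
    ∀ n : ℕ, ∀ i j : Fin N,
      (((N - 1 - (i : ℕ) : ℕ) : ℂ) - ((N - 1 - (j : ℕ) : ℕ) : ℂ)) * ((matA N ν) ^ n) i j
        = (n : ℂ) * ((matA N ν) ^ n) i j := by
  intro n
  induction n with
  | zero =>
    intro i j
    by_cases hij : i = j
    · subst hij; ring
    · simp [Matrix.one_apply_ne hij]
  | succ n ih =>
    intro i j
    rw [pow_succ, Matrix.mul_apply, Finset.mul_sum, Finset.mul_sum]
    apply Finset.sum_congr rfl
    intro k _
    by_cases hk : (j : ℕ) = (k : ℕ) + 1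
    · have hcast : ((N - 1 - (k : ℕ) : ℕ) : ℂ) = ((N - 1 - (j : ℕ) : ℕ) : ℂ) + 1 := by
        have hj : (j : ℕ) < N := j.isLt
        have h1 : (N - 1 - (k : ℕ) : ℕ) = (N - 1 - (j : ℕ) : ℕ) + 1 := by omega
        rw [h1]; push_cast; ring
      have hih := ih i k
      push_cast
      linear_combination (matA N ν k j) * hih + (((matA N ν) ^ n) i k * matA N ν k j) * hcast
    · have : matA N ν k j = 0 := by simp [matA, hk]
      rw [this, mul_zero, mul_zero, mul_zero]

lemma hasDerivAt_cpow_ofReal (w : ℂ) {t : ℝ} (ht : 0 < t) :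
    HasDerivAt (fun s : ℝ => (s : ℂ) ^ w) (w * (t : ℂ)⁻¹ * (t : ℂ) ^ w) t := by
  by_cases hw : w = 0
  · subst hw
    simp only [Complex.cpow_zero, zero_mul]
    exact hasDerivAt_const t 1
  · have hw1 : w - 1 ≠ -1 := by
      intro h; apply hw; linear_combination h
    have h := hasDerivAt_ofReal_cpow_const' (ne_of_gt ht) hw1
    simp only [sub_add_cancel] at h
    have h2 := h.const_mul w
    have heq : (fun y : ℝ => w * ((y : ℂ) ^ w / w)) = fun y : ℝ => (y : ℂ) ^ w := by
      funext y
      rw [← mul_div_assoc, mul_div_cancel_left₀ _ hw]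
    rw [heq] at h2
    convert h2 using 1
    · rfl
    have htne : (t : ℂ) ≠ 0 := by
      simpa using ne_of_gt ht
    rw [Complex.cpow_sub _ _ htne, Complex.cpow_one]
    field_simp

theorem T_satisfies_ODE (N : ℕ) (ν : ℕ → ℂ)
    (hν : ∀ i, 1 ≤ i → i ≤ N - 1 → ν i ≠ 0) (t : ℝ) (ht : 0 < t) :
    ∀ i j : Fin N, HasDerivAt (fun s : ℝ => matT N ν s i j)
      (((1 / 2 : ℂ) • (((t : ℂ)⁻¹ • matJ N + matA N ν) * matT N ν t)) i j) t := by
  intro i j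
  set A := matA N ν with hA
  set ci : ℂ := ((N - 1 - (i : ℕ) : ℕ) : ℂ) with hci
  set cj : ℂ := ((N - 1 - (j : ℕ) : ℕ) : ℂ) with hcj
  set w : ℂ := cj / 2 with hw
  have htne : (t : ℂ) ≠ 0 := by simpa using ne_of_gt ht
  -- entry of matT
  have hentry : ∀ s : ℝ, matT N ν s i j
      = (∑ n ∈ Finset.range N, ((s : ℂ) ^ n * ((n : ℕ).factorial : ℂ)⁻¹) * (A ^ n) i j)
        * (s : ℂ) ^ w := by
    intro s
    rw [matT, tJhalf, Matrix.mul_diagonal, expA_eq, Matrix.sum_apply]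
    simp only [Matrix.smul_apply, smul_eq_mul]
    rfl
  -- derivative of the polynomial part
  have hD1 : HasDerivAt
      (fun s : ℝ => ∑ n ∈ Finset.range N, ((s : ℂ) ^ n * ((n : ℕ).factorial : ℂ)⁻¹) * (A ^ n) i j)
      (∑ n ∈ Finset.range N, ((n : ℂ) * (t : ℂ) ^ (n - 1) * ((n : ℕ).factorial : ℂ)⁻¹) * (A ^ n) i j)
      t := by
    apply HasDerivAt.fun_sum
    intro n _
    have hp : HasDerivAt (fun s : ℝ => (s : ℂ) ^ n) ((n : ℂ) * (t : ℂ) ^ (n - 1)) t :=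
      (hasDerivAt_pow n ((t : ℂ))).comp_ofReal
    simpa [mul_assoc, mul_comm, mul_left_comm] using
      (hp.mul_const (((n : ℕ).factorial : ℂ)⁻¹)).mul_const ((A ^ n) i j)
  have hP : HasDerivAt (fun s : ℝ => (s : ℂ) ^ w) (w * (t : ℂ)⁻¹ * (t : ℂ) ^ w) t :=
    hasDerivAt_cpow_ofReal w ht
  have hprod := hD1.mul hP
  have hfun : HasDerivAt (fun s : ℝ => matT N ν s i j)
      ((∑ n ∈ Finset.range N, ((n : ℂ) * (t : ℂ) ^ (n - 1) * ((n : ℕ).factorial : ℂ)⁻¹) * (A ^ n) i j)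
          * (t : ℂ) ^ w
        + (∑ n ∈ Finset.range N, ((t : ℂ) ^ n * ((n : ℕ).factorial : ℂ)⁻¹) * (A ^ n) i j)
          * (w * (t : ℂ)⁻¹ * (t : ℂ) ^ w)) t := by
    have := hprod
    rw [show (fun s : ℝ => matT N ν s i j) = _ from funext hentry]
    convert this using 1
    all_goals rfl
  -- abbreviations
  set S : ℂ := ∑ n ∈ Finset.range N, ((t : ℂ) ^ n * ((n : ℕ).factorial : ℂ)⁻¹) * (A ^ n) i j with hS
  set D1 : ℂ := ∑ n ∈ Finset.range N,
      ((n : ℂ) * (t : ℂ) ^ (n - 1) * ((n : ℕ).factorial : ℂ)⁻¹) * (A ^ n) i j with hD1def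
  -- F3 : D1 = second sum
  have F3 : D1 = ∑ n ∈ Finset.range N, ((t : ℂ) ^ n * ((n : ℕ).factorial : ℂ)⁻¹) * (A ^ (n + 1)) i j := by
    rw [hD1def]
    cases N with
    | zero => simp
    | succ M =>
      rw [Finset.sum_range_succ' (fun n => ((n : ℂ) * (t : ℂ) ^ (n - 1) * ((n : ℕ).factorial : ℂ)⁻¹) * (A ^ n) i j) M]
      rw [Finset.sum_range_succ (fun n => ((t : ℂ) ^ n * ((n : ℕ).factorial : ℂ)⁻¹) * (A ^ (n + 1)) i j) M]
      have hz : (A ^ (M + 1)) i j = 0 := by rw [hA, matA_pow_N]; rfl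
      rw [hz]
      simp only [Nat.cast_zero, zero_mul, mul_zero, add_zero, Nat.add_sub_cancel]
      apply Finset.sum_congr rfl
      intro n _
      have h1 : ((n : ℂ) + 1) ≠ 0 := Nat.cast_add_one_ne_zero n
      have h2 : (((n : ℕ).factorial : ℂ)) ≠ 0 := Nat.cast_ne_zero.2 (Nat.factorial_ne_zero n)
      rw [Nat.factorial_succ]
      push_cast
      field_simp
  -- F4 : (ci - cj) * S = t * D1
  have F4 : (ci - cj) * S = (t : ℂ) * D1 := by
    rw [hS, hD1def, Finset.mul_sum, Finset.mul_sum]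
    apply Finset.sum_congr rfl
    intro n _
    have hc := comm_pow N ν n i j
    rw [← hA, ← hci, ← hcj] at hc
    cases n with
    | zero =>
      simp only [Nat.cast_zero, zero_mul] at hc ⊢
      linear_combination ((t : ℂ) ^ 0 * ((Nat.factorial 0 : ℕ) : ℂ)⁻¹) * hc
    | succ n =>
      simp only [Nat.add_sub_cancel] at *
      push_cast at hc ⊢
      linear_combination ((t : ℂ) ^ (n + 1) * (((n + 1).factorial : ℕ) : ℂ)⁻¹) * hc
  have hti : (t : ℂ)⁻¹ * (t : ℂ) = 1 := inv_mul_cancel₀ htne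
  convert hfun using 1
  simp only [hA, matT, matJ, tJhalf, Matrix.add_mul, Matrix.smul_mul, Matrix.smul_apply,
    Matrix.add_apply, ← Matrix.mul_assoc, Matrix.mul_diagonal, Matrix.diagonal_mul,
    smul_eq_mul, expA_eq, Matrix.mul_sum, Matrix.mul_smul, ← pow_succ',
    Matrix.sum_apply]
  have hsum : (∑ x ∈ Finset.range N, (t : ℂ) ^ x * ((x.factorial : ℕ) : ℂ)⁻¹ *
        ((t : ℂ)⁻¹ * ((((N - 1 - (i : ℕ) : ℕ)) : ℂ) * (matA N ν ^ x) i j)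
          + (matA N ν ^ (x + 1)) i j))
      = (t : ℂ)⁻¹ * (ci * S) + D1 := by
    simp only [← hA]
    rw [F3, hS, ← hci]
    rw [Finset.mul_sum, Finset.mul_sum, ← Finset.sum_add_distrib]
    apply Finset.sum_congr rfl
    intro n _
    ring
  rw [hsum, ← hcj, ← hw]
  linear_combination (-(S * (t : ℂ)⁻¹ * (t : ℂ) ^ w)) * hw
    + ((1 / 2 : ℂ) * (t : ℂ)⁻¹ * (t : ℂ) ^ w) * F4
    + ((1 / 2 : ℂ) * D1 * (t : ℂ) ^ w) * hti
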